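/- Let f, g, u : ℝ → ℂ be infinitely differentiable. Then [⟨f⟩₄, ⟨g⟩₀] u = 4 ⟨f·g'⟩₃ u − 2 ⟨3f'·g'' + f·g'''⟩₁ u, as an identity of functions evaluated at every x ∈ ℝ. -/
import Mathlib

open scoped ContDiff

private lemma dmul {a b : ℝ → ℂ} (ha : ContDiff ℝ ∞ a) (hb : ContDiff ℝ ∞ b) :
    deriv (fun y => a y * b y) = fun y => deriv a y * b y + a y * deriv b y := by
  funext y
  exact deriv_mul (ha.differentiable (by simp) y) (hb.differentiable (by simp) y)

private lemma dadd {a b : ℝ → ℂ} (ha : ContDiff ℝ ∞ a) (hb : ContDiff ℝ ∞ b) :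
    deriv (fun y => a y + b y) = fun y => deriv a y + deriv b y := by
  funext y
  exact deriv_add (ha.differentiable (by simp) y) (hb.differentiable (by simp) y)

private lemma cdd {a : ℝ → ℂ} (ha : ContDiff ℝ ∞ a) : ContDiff ℝ ∞ (deriv a) :=
  (contDiff_infty_iff_deriv.mp ha).2

/-- The anti-commutator operator `⟨f⟩ₖ u = (1/2)(f·u⁽ᵏ⁾ + (f·u)⁽ᵏ⁾)`. -/
noncomputable def ang (k : ℕ) (f u : ℝ → ℂ) : ℝ → ℂ :=
  fun x => (1/2 : ℂ) * (f x * iteratedDeriv k u x + iteratedDeriv k (f * u) x)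

set_option maxHeartbeats 2000000 in
theorem commutator_ang4_ang0 (f g u : ℝ → ℂ)
    (hf : ContDiff ℝ (⊤ : ℕ∞) f) (hg : ContDiff ℝ (⊤ : ℕ∞) g) (hu : ContDiff ℝ (⊤ : ℕ∞) u) (x : ℝ) :
    ang 4 f (ang 0 g u) x - ang 0 g (ang 4 f u) x
      = 4 * ang 3 (fun y => f y * deriv g y) u x
        - 2 * ang 1 (fun y => 3 * deriv f y * iteratedDeriv 2 g y
            + f y * iteratedDeriv 3 g y) u x := by
  replace hf : ContDiff ℝ ∞ f := hf.of_le (by simp)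
  replace hg : ContDiff ℝ ∞ g := hg.of_le (by simp)
  replace hu : ContDiff ℝ ∞ u := hu.of_le (by simp)
  have hf1 := cdd hf; have hf2 := cdd hf1; have hf3 := cdd hf2; have hf4 := cdd hf3
  have hg1 := cdd hg; have hg2 := cdd hg1; have hg3 := cdd hg2; have hg4 := cdd hg3
  have hu1 := cdd hu; have hu2 := cdd hu1; have hu3 := cdd hu2; have hu4 := cdd hu3
  have hang0 : ang 0 g u = fun y => g y * u y := by
    funext y; simp [ang, Pi.mul_apply]; ring
  rw [hang0]
  simp only [ang, Pi.mul_def, iteratedDeriv_succ, iteratedDeriv_zero]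
  simp (disch := fun_prop) only [dmul, dadd, deriv_const']
  ring
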